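/- Let M_k be the free monoid on generators e₁,…,e_k and let M_{k-1} be the submonoid generated by e₁,…,e_{k-1}. If p is a finitely supported function on M_{k-1}, then for every finitely supported q on M_k, ‖(p · δ_{e_k}) * q‖₂ = ‖p‖₂ ‖q‖₂; in particular the operator norm of left convolution by p * δ_{e_k} on ℓ²(M_k) equals ‖p‖₂. -/

import Mathlib

/-!
Every word of the product `(p · δ_{e_k}) * q` has the form `x e_k y` with `x` in the support
of `p` and `y` in that of `q`, and since `x` avoids `e_k` the factorisation can be read off the
first occurrence of `e_k`. Hence the convolution has no collisions: its coefficients are exactly the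
products `p(x) q(y)`, and the sum of their squares factors as `‖p‖₂² ‖q‖₂²`.
-/

open Finset Pointwise

/-- The ℓ² norm of a finitely supported function on the free monoid. -/
noncomputable def l2norm {k : ℕ} (p : MonoidAlgebra ℂ (FreeMonoid (Fin k))) : ℝ :=
  Real.sqrt (∑ x ∈ p.coeff.support, ‖p.coeff x‖ ^ 2)

theorem List.eq_and_eq_of_append_cons_eq_append_cons {α : Type*} {a : α} {x x' y y' : List α}
    (hx : a ∉ x) (hx' : a ∉ x') (h : x ++ a :: y = x' ++ a :: y') : x = x' ∧ y = y' := by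
  classical
  have hlen : x.length = x'.length := by
    simpa [List.idxOf_append_of_notMem hx, List.idxOf_append_of_notMem hx'] using
      congrArg (List.idxOf a) h
  obtain ⟨rfl, hcons⟩ := List.append_inj h hlen
  exact ⟨rfl, List.cons_injective hcons⟩

theorem FreeMonoid.eq_and_eq_of_mul_of_mul_eq {α : Type*} {a : α} {x x' y y' : FreeMonoid α}
    (hx : a ∉ x) (hx' : a ∉ x') (h : x * of a * y = x' * of a * y') : x = x' ∧ y = y' := by
  have hlist := congrArg toList h
  simp only [toList_mul, toList_of, List.append_assoc, List.singleton_append] at hlist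
  obtain ⟨hxx', hyy'⟩ := List.eq_and_eq_of_append_cons_eq_append_cons hx hx' hlist
  exact ⟨toList.injective hxx', toList.injective hyy'⟩

namespace MonoidAlgebra

variable {R G : Type*} [SeminormedRing R]

theorem sum_norm_sq_coeff_mul_of_injOn [NormMulClass R] [Mul G] (x y : MonoidAlgebra R G)
    (h : Set.InjOn (fun m : G × G ↦ m.1 * m.2) ↑(x.coeff.support ×ˢ y.coeff.support)) :
    ∑ m ∈ (x * y).coeff.support, ‖(x * y).coeff m‖ ^ 2
      = (∑ m ∈ x.coeff.support, ‖x.coeff m‖ ^ 2) * ∑ m ∈ y.coeff.support, ‖y.coeff m‖ ^ 2 := by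
  classical
  have hunique : ∀ m ∈ x.coeff.support ×ˢ y.coeff.support,
      UniqueMul x.coeff.support y.coeff.support m.1 m.2 := fun m hm a b ha hb hab ↦
    Prod.ext_iff.mp <| h (show (a, b) ∈ _ from mem_product.mpr ⟨ha, hb⟩) hm hab
  calc ∑ m ∈ (x * y).coeff.support, ‖(x * y).coeff m‖ ^ 2
      = ∑ m ∈ x.coeff.support * y.coeff.support, ‖(x * y).coeff m‖ ^ 2 :=
        sum_subset (support_coeff_mul_subset x y) fun m _ hm ↦ by
          simp [Finsupp.notMem_support_iff.mp hm]
    _ = ∑ m ∈ x.coeff.support ×ˢ y.coeff.support, ‖(x * y).coeff (m.1 * m.2)‖ ^ 2 := by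
        rw [← image_mul_product, sum_image h]
    _ = ∑ m ∈ x.coeff.support ×ˢ y.coeff.support,
          ‖x.coeff m.1‖ ^ 2 * ‖y.coeff m.2‖ ^ 2 :=
        sum_congr rfl fun m hm ↦ by
          rw [coeff_mul_mul_of_uniqueMul (hunique m hm), norm_mul, mul_pow]
    _ = _ := by rw [sum_mul_sum, sum_product]

theorem sum_norm_sq_coeff_mul_single_one [Mul G] [IsRightCancelMul G]
    (x : MonoidAlgebra R G) (g : G) :
    ∑ m ∈ (x * single g 1).coeff.support, ‖(x * single g 1).coeff m‖ ^ 2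
      = ∑ m ∈ x.coeff.support, ‖x.coeff m‖ ^ 2 := by
  rw [support_coeff_mul_single _ _ (by simp), sum_map]
  refine sum_congr rfl fun m _ ↦ ?_
  rw [mulRightEmbedding_apply, coeff_mul_single_eq_coeff_mul m fun _ _ ↦ mul_left_inj g,
    mul_one]

end MonoidAlgebra

theorem FreeMonoid.injOn_mul_support_mul_single_of_notMem {R α : Type*} [Semiring R]
    (p q : MonoidAlgebra R (FreeMonoid α)) (a : α) (hp : ∀ x ∈ p.coeff.support, a ∉ x) :
    Set.InjOn (fun m : FreeMonoid α × FreeMonoid α ↦ m.1 * m.2)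
      ↑((p * MonoidAlgebra.single (of a) 1).coeff.support ×ˢ q.coeff.support) := by
  rw [MonoidAlgebra.support_coeff_mul_single _ _ (by simp)]
  rintro ⟨_, y⟩ hxy ⟨_, y'⟩ hxy' heq
  simp only [coe_product, Set.mem_prod, coe_map, Set.mem_image, mem_coe, mulRightEmbedding_apply]
    at hxy hxy'
  obtain ⟨⟨x, hx, rfl⟩, -⟩ := hxy
  obtain ⟨⟨x', hx', rfl⟩, -⟩ := hxy'
  obtain ⟨rfl, rfl⟩ := eq_and_eq_of_mul_of_mul_eq (hp x hx) (hp x' hx') heq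
  rfl

section l2norm

variable {k : ℕ}

theorem l2norm_nonneg (p : MonoidAlgebra ℂ (FreeMonoid (Fin k))) : 0 ≤ l2norm p :=
  Real.sqrt_nonneg _

theorem l2norm_one : l2norm (1 : MonoidAlgebra ℂ (FreeMonoid (Fin k))) = 1 := by
  simp [l2norm, MonoidAlgebra.one_def]

theorem l2norm_mul_of_injOn (p q : MonoidAlgebra ℂ (FreeMonoid (Fin k)))
    (h : Set.InjOn (fun m : FreeMonoid (Fin k) × FreeMonoid (Fin k) ↦ m.1 * m.2)
      ↑(p.coeff.support ×ˢ q.coeff.support)) :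
    l2norm (p * q) = l2norm p * l2norm q := by
  rw [l2norm, l2norm, l2norm, MonoidAlgebra.sum_norm_sq_coeff_mul_of_injOn p q h,
    Real.sqrt_mul (by positivity)]

theorem l2norm_mul_single_one (p : MonoidAlgebra ℂ (FreeMonoid (Fin k)))
    (g : FreeMonoid (Fin k)) : l2norm (p * MonoidAlgebra.single g 1) = l2norm p := by
  rw [l2norm, l2norm, MonoidAlgebra.sum_norm_sq_coeff_mul_single_one]

theorem l2norm_mul_single_of_mul_of_notMem (p q : MonoidAlgebra ℂ (FreeMonoid (Fin k)))
    (a : Fin k) (hp : ∀ x ∈ p.coeff.support, a ∉ x) :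
    l2norm (p * MonoidAlgebra.single (FreeMonoid.of a) 1 * q) = l2norm p * l2norm q := by
  rw [l2norm_mul_of_injOn _ _ (FreeMonoid.injOn_mul_support_mul_single_of_notMem p q a hp),
    l2norm_mul_single_one]

end l2norm

/-- Let `M_{k+1}` be the free monoid on generators `e₀, …, e_k` and let `p` be supported
on the submonoid `M_k` of words avoiding the last generator `e_k`. Then for every finitely
supported `q`, `‖(p · δ_{e_k}) * q‖₂ = ‖p‖₂ ‖q‖₂`; in particular the operator norm of left
convolution by `p * δ_{e_k}` on `ℓ²(M_{k+1})` equals `‖p‖₂`. -/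
theorem convolution_norm_mul_last_generator {k : ℕ}
    (p : MonoidAlgebra ℂ (FreeMonoid (Fin (k + 1))))
    (hp : ∀ x ∈ p.coeff.support, Fin.last k ∉ x.toList) :
    (∀ q : MonoidAlgebra ℂ (FreeMonoid (Fin (k + 1))),
      l2norm ((p * MonoidAlgebra.single (FreeMonoid.of (Fin.last k)) 1) * q)
        = l2norm p * l2norm q) ∧
    IsGreatest {r : ℝ | ∃ q : MonoidAlgebra ℂ (FreeMonoid (Fin (k + 1))),
      l2norm q ≤ 1 ∧
        r = l2norm ((p * MonoidAlgebra.single (FreeMonoid.of (Fin.last k)) 1) * q)}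
      (l2norm p) := by
  have hmul q := l2norm_mul_single_of_mul_of_notMem p q (Fin.last k) hp
  refine ⟨hmul, ⟨1, l2norm_one.le, by rw [hmul, l2norm_one, mul_one]⟩, ?_⟩
  rintro r ⟨q, hq, rfl⟩
  rw [hmul]
  exact mul_le_of_le_one_right (l2norm_nonneg p) hq
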